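/- arXiv:2502.02553 — 4 statements merged into one kernel-verified Lean document; each statement's English description precedes it below -/
import Mathlib

section
/- Let G be a simple undirected graph with vertex set V, and let U be the set of universal vertices of G (vertices adjacent to all other vertices). Then G has the Kirby--Love property if and only if the maximal cliques of the subgraph induced on V \ U are not pairwise disjoint. -/
/-- The Kirby--Love property: there are vertices `a, b, c, d` (with `a ≠ d` and `b ≠ c`)
such that `{a,b}` and `{a,c}` are edges but `{a,d}` and `{b,c}` are not edges. -/
def HasKirbyLove {V : Type*} (G : SimpleGraph V) : Prop :=
  ∃ a b c d : V, G.Adj a b ∧ G.Adj a c ∧ ¬ G.Adj a d ∧ ¬ G.Adj b c ∧ a ≠ d ∧ b ≠ c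

/-- A maximal clique: a clique not properly contained in any other clique. -/
def IsMaxClique {V : Type*} (G : SimpleGraph V) (s : Set V) : Prop :=
  G.IsClique s ∧ ∀ t : Set V, G.IsClique t → s ⊆ t → s = t

/-- The set of universal vertices of `G`: vertices adjacent to all other vertices. -/
def universalSet {V : Type*} (G : SimpleGraph V) : Set V :=
  {v | ∀ w, w ≠ v → G.Adj v w}

/-- Any clique extends to a maximal clique (Zorn). -/
lemma exists_maxClique_superset {V : Type*} (G : SimpleGraph V) {s : Set V}
    (hs : G.IsClique s) : ∃ m : Set V, s ⊆ m ∧ IsMaxClique G m := by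
  obtain ⟨m, hsm, hm⟩ := zorn_subset_nonempty {t : Set V | G.IsClique t}
    (fun c hcS hchain hne => by
      refine ⟨⋃₀ c, fun x hx y hy hxy => ?_, fun t ht => Set.subset_sUnion_of_mem ht⟩
      obtain ⟨tx, htx, hxtx⟩ := hx
      obtain ⟨ty, hty, hyty⟩ := hy
      rcases hchain.total htx hty with h | h
      · exact hcS hty (h hxtx) hyty hxy
      · exact hcS htx hxtx (h hyty) hxy) s hs
  exact ⟨m, hsm, hm.1, fun t ht hmt => hm.eq_of_le ht hmt⟩

/-- A graph `G` has the Kirby--Love property if and only if the maximal cliques of the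
subgraph induced on the complement of the set of universal vertices are *not*
pairwise disjoint. -/
theorem hasKirbyLove_iff_not_disjoint_maxCliques {V : Type*} (G : SimpleGraph V) :
    HasKirbyLove G ↔
      ¬ (∀ s t : Set ↥(universalSet G)ᶜ,
          IsMaxClique (G.induce (universalSet G)ᶜ) s →
          IsMaxClique (G.induce (universalSet G)ᶜ) t → s ≠ t → Disjoint s t) := by
  set U := universalSet G
  set H := G.induce Uᶜ
  have hmem : ∀ v : V, v ∈ Uᶜ ↔ ∃ w, w ≠ v ∧ ¬ G.Adj v w := by
    intro v
    simp only [U, universalSet, Set.mem_compl_iff, Set.mem_setOf_eq]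
    push_neg
    rfl
  constructor
  · rintro ⟨a, b, c, d, hab, hac, had, hbc, hadne, hbcne⟩
    intro hdisj
    have haU : a ∈ Uᶜ := (hmem a).mpr ⟨d, fun h => hadne h.symm, had⟩
    have hbU : b ∈ Uᶜ := (hmem b).mpr ⟨c, fun h => hbcne h.symm, hbc⟩
    have hcU : c ∈ Uᶜ := (hmem c).mpr ⟨b, fun h => hbcne h, fun h => hbc h.symm⟩
    set a' : ↥Uᶜ := ⟨a, haU⟩
    set b' : ↥Uᶜ := ⟨b, hbU⟩
    set c' : ↥Uᶜ := ⟨c, hcU⟩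
    have hab' : H.Adj a' b' := hab
    have hac' : H.Adj a' c' := hac
    have hcl1 : H.IsClique {a', b'} := SimpleGraph.isClique_pair.mpr fun _ => hab'
    have hcl2 : H.IsClique {a', c'} := SimpleGraph.isClique_pair.mpr fun _ => hac'
    obtain ⟨s, hss, hsmax⟩ := exists_maxClique_superset H hcl1
    obtain ⟨t, hts, htmax⟩ := exists_maxClique_superset H hcl2
    have hst : s ≠ t := by
      intro h
      have hb : b' ∈ t := h ▸ hss (show b' ∈ ({a', b'} : Set _) by simp)
      have hc : c' ∈ t := hts (show c' ∈ ({a', c'} : Set _) by simp)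
      have : b' ≠ c' := fun h => hbcne (congrArg Subtype.val h)
      exact hbc (htmax.1 hb hc this)
    exact (hdisj s t hsmax htmax hst).ne_of_mem (hss (show a' ∈ ({a', b'} : Set _) by simp)) (hts (show a' ∈ ({a', c'} : Set _) by simp)) rfl
  · intro hndisj
    push_neg at hndisj
    obtain ⟨s, t, hsmax, htmax, hst, hnd⟩ := hndisj
    rw [Set.not_disjoint_iff] at hnd
    obtain ⟨a, has, hat⟩ := hnd
    -- find b ∈ s \ t
    have : ¬ s ⊆ t := fun h => hst (hsmax.2 t htmax.1 h)
    obtain ⟨b, hbs, hbt⟩ := Set.not_subset.mp this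
    -- t ∪ {b} is not a clique
    have hins : ¬ H.IsClique (insert b t) := by
      intro h
      exact hbt ((htmax.2 _ h (Set.subset_insert b t)) ▸ Set.mem_insert b t)
    -- so there is c ∈ t with b ≠ c and ¬ H.Adj b c
    have hbcex : ∃ c ∈ t, b ≠ c ∧ ¬ H.Adj b c := by
      by_contra hcon
      push_neg at hcon
      apply hins
      intro x hx y hy hxy
      rcases hx with hx | hx <;> rcases hy with hy | hy
      · exact absurd (hx.trans hy.symm) hxy
      · subst hx
        rcases eq_or_ne x y with h | h
        · exact absurd h hxy
        · exact hcon y hy h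
      · subst hy
        rcases eq_or_ne y x with h | h
        · exact absurd h.symm hxy
        · exact (hcon x hx h).symm
      · exact htmax.1 hx hy hxy
    obtain ⟨c, hct, hbc, hnadj⟩ := hbcex
    have hba : b ≠ a := fun h => hbt (h ▸ hat)
    have hadjab : H.Adj a b := (hsmax.1 has hbs hba.symm)
    have hca : c ≠ a := by
      intro h
      exact hnadj (h ▸ hadjab.symm)
    have hadjac : H.Adj a c := htmax.1 hat hct hca.symm
    obtain ⟨d, hdne, hnad⟩ := (hmem a).mp a.2
    refine ⟨a, b, c, d, hadjab, hadjac, hnad, hnadj, fun h => hdne h.symm, ?_⟩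
    exact fun h => hbc (Subtype.ext h)
end

section
/- Let C ⊆ F_2^n be a linear code such that for all x, y, z ∈ C (not necessarily distinct), Σ_{j=1}^n x_j y_j z_j = 0 in F_2. If this triple-product condition holds for all rows of a generating set of C and all generators have even weight, then it holds for all triples of elements of C. -/
/-- Strong triorthogonality propagates from a generating set to the whole code: if for
all (not necessarily distinct) elements `x, y, z` of a generating set `S` of a linear
code `C ⊆ F₂ⁿ` we have `∑ j, x j * y j * z j = 0`, and every generator has even weight,
then `∑ j, x j * y j * z j = 0` for all `x, y, z ∈ C`. -/
theorem strong_triorthogonality_of_generators (n : ℕ) (S : Set (Fin n → ZMod 2))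
    (hgen : ∀ x ∈ S, ∀ y ∈ S, ∀ z ∈ S, ∑ j : Fin n, x j * y j * z j = 0)
    (hwt : ∀ g ∈ S, ∑ j : Fin n, g j = 0) :
    ∀ x ∈ Submodule.span (ZMod 2) S, ∀ y ∈ Submodule.span (ZMod 2) S,
      ∀ z ∈ Submodule.span (ZMod 2) S, ∑ j : Fin n, x j * y j * z j = 0 := by
  intro x hx
  induction hx using Submodule.span_induction with
  | mem x hxS =>
    intro y hy
    induction hy using Submodule.span_induction with
    | mem y hyS =>
      intro z hz
      induction hz using Submodule.span_induction with
      | mem z hzS => exact hgen x hxS y hyS z hzS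
      | zero => simp
      | add z w _ _ hz hw =>
        simp only [Pi.add_apply, mul_add, Finset.sum_add_distrib, hz, hw, add_zero]
      | smul c z _ hz =>
        simp only [Pi.smul_apply, smul_eq_mul, mul_left_comm _ c, ← Finset.mul_sum, hz,
          mul_zero]
    | zero => intro z _; simp
    | add y w _ _ hy hw =>
      intro z hz
      simp only [Pi.add_apply, add_mul, mul_add, Finset.sum_add_distrib, hy z hz, hw z hz,
        add_zero]
    | smul c y _ hy =>
      intro z hz
      have := hy z hz
      simp only [Pi.smul_apply, smul_eq_mul]
      calc ∑ j : Fin n, x j * (c * y j) * z j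
          = c * ∑ j : Fin n, x j * y j * z j := by
            rw [Finset.mul_sum]; congr 1; ext j; ring
        _ = 0 := by rw [this, mul_zero]
  | zero => intro y _ z _; simp
  | add x w _ _ hx hw =>
    intro y hy z hz
    simp only [Pi.add_apply, add_mul, Finset.sum_add_distrib, hx y hy z hz, hw y hy z hz,
      add_zero]
  | smul c x _ hx =>
    intro y hy z hz
    have := hx y hy z hz
    simp only [Pi.smul_apply, smul_eq_mul]
    calc ∑ j : Fin n, c * x j * y j * z j
        = c * ∑ j : Fin n, x j * y j * z j := by
          rw [Finset.mul_sum]; congr 1; ext j; ring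
      _ = 0 := by rw [this, mul_zero]
end

section
/- Let R be a semifield in which the sum of any two nonzero elements is nonzero (a zerosumfree semifield, e.g., the nonnegative reals). Let X be a finite set partitioned as X = U ⊔ C'_1 ⊔ ⋯ ⊔ C'_m with m ≥ 1, let O be a finite set, and for each i let e_i : O^{U ∪ C'_i} → R be an R-distribution (values summing to 1) such that the marginals of all e_i to O^U agree; call this common marginal (d_x)_{x ∈ O^U}. Define d : O^X → R by d(x, y_1, …, y_m) = d_x^{-(m-1)} · Π_i e_i(x, y_i) if d_x ≠ 0, and 0 otherwise. Then d is an R-distribution on O^X whose marginal to each O^{U ∪ C'_i} equals e_i. -/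
/-- In a zerosumfree semiring, a finite sum is zero only if each term is zero. -/
lemma zsf_sum_eq_zero {R : Type*} [AddCommMonoid R]
    (hzs : ∀ a b : R, a + b = 0 → a = 0)
    {ι : Type*} (s : Finset ι) (f : ι → R) (h : ∑ i ∈ s, f i = 0) :
    ∀ i ∈ s, f i = 0 := by
  classical
  induction s using Finset.cons_induction with
  | empty => simp
  | cons a s ha ih =>
    rw [Finset.sum_cons] at h
    intro i hi
    rcases Finset.mem_cons.mp hi with rfl | hi
    · exact hzs _ _ h
    · exact ih (by rw [add_comm] at h; exact hzs _ _ h) i hi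

/-- Gluing construction for compatible `R`-distributions over a zerosumfree semifield
`R`. The set `X` is partitioned as `U ⊔ C₁ ⊔ ⋯ ⊔ C_m`; for each `i`, `e i` is an
`R`-distribution on `O^{U ∪ Cᵢ}` (written as a function of the `U`-part and the
`Cᵢ`-part), all having the same marginal `dm` on `O^U`. Then
`d(x, y₁, …, y_m) = dm(x)^{-(m-1)} ∏ᵢ e i x yᵢ` (and `0` when `dm x = 0`) is an
`R`-distribution on `O^X` whose marginal to each `O^{U ∪ Cᵢ}` is `e i`. -/
theorem glueing_distribution {R : Type*} [Semifield R] [DecidableEq R]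
    (hzs : ∀ a b : R, a + b = 0 → a = 0)
    {m : ℕ} (hm : 0 < m)
    {U O : Type*} [Fintype U] [DecidableEq U] [Fintype O] [DecidableEq O]
    {C : Fin m → Type*} [∀ i, Fintype (C i)] [∀ i, DecidableEq (C i)]
    (e : ∀ i, (U → O) → (C i → O) → R)
    (hdist : ∀ i, ∑ x : U → O, ∑ y : C i → O, e i x y = 1)
    (dm : (U → O) → R)
    (hmarg : ∀ i (x : U → O), ∑ y : C i → O, e i x y = dm x) :
    (∑ x : U → O, ∑ y : ∀ i, C i → O,
        (if dm x = 0 then 0 else (dm x)⁻¹ ^ (m - 1) * ∏ i, e i x (y i)) = 1) ∧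
    (∀ i (x : U → O) (yi : C i → O),
        ∑ y ∈ Finset.univ.filter (fun y : ∀ j, C j → O => y i = yi),
          (if dm x = 0 then 0 else (dm x)⁻¹ ^ (m - 1) * ∏ j, e j x (y j)) =
        e i x yi) := by
  classical
  have i0 : Fin m := ⟨0, hm⟩
  -- full sum over all y of the product is dm x ^ m
  have hfull : ∀ x : U → O, ∑ y : ∀ i, C i → O, ∏ i, e i x (y i) = dm x ^ m := by
    intro x
    rw [← Fintype.prod_sum (fun i (yi : C i → O) => e i x yi)]
    simp [hmarg, Finset.prod_const]
  constructor
  · have hx : ∀ x : U → O,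
        (∑ y : ∀ i, C i → O,
          (if dm x = 0 then 0 else (dm x)⁻¹ ^ (m - 1) * ∏ i, e i x (y i))) = dm x := by
      intro x
      by_cases h : dm x = 0
      · simp [h]
      · simp only [if_neg h, ← Finset.mul_sum, hfull]
        have hmm : dm x ^ m = dm x ^ (m - 1) * dm x := by
          rw [← pow_succ]
          congr 1
          omega
        rw [hmm, ← mul_assoc, ← mul_pow, inv_mul_cancel₀ h, one_pow, one_mul]
    calc ∑ x : U → O, ∑ y : ∀ i, C i → O,
          (if dm x = 0 then 0 else (dm x)⁻¹ ^ (m - 1) * ∏ i, e i x (y i))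
        = ∑ x : U → O, dm x := Finset.sum_congr rfl fun x _ => hx x
      _ = ∑ x : U → O, ∑ y : C i0 → O, e i0 x y := by
          exact Finset.sum_congr rfl fun x _ => (hmarg i0 x).symm
      _ = 1 := hdist i0
  · intro i x yi
    -- the filtered sum of products
    have hsub : ∑ y ∈ Finset.univ.filter (fun y : ∀ j, C j → O => y i = yi),
        ∏ j, e j x (y j) = e i x yi * dm x ^ (m - 1) := by
      rw [Finset.sum_filter]
      rw [← Equiv.sum_comp (Equiv.piSplitAt i fun j => C j → O).symm
        (fun y => if y i = yi then ∏ j, e j x (y j) else 0)]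
      rw [Fintype.sum_prod_type]
      have hai : ∀ (a : C i → O) (b : ∀ j : {j // j ≠ i}, C j → O),
          (Equiv.piSplitAt i (fun j => C j → O)).symm (a, b) i = a := by
        intro a b
        simp [Equiv.piSplitAt]
      have hbj : ∀ (a : C i → O) (b : ∀ j : {j // j ≠ i}, C j → O)
          (j : Fin m) (hj : j ≠ i),
          (Equiv.piSplitAt i (fun j => C j → O)).symm (a, b) j = b ⟨j, hj⟩ := by
        intro a b j hj
        simp [Equiv.piSplitAt, dif_neg hj]
      have : ∀ a : C i → O, ∑ b : ∀ j : {j // j ≠ i}, C j → O,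
          (if (Equiv.piSplitAt i (fun j => C j → O)).symm (a, b) i = yi then
            ∏ j, e j x ((Equiv.piSplitAt i (fun j => C j → O)).symm (a, b) j) else 0)
          = if a = yi then e i x a * dm x ^ (m - 1) else 0 := by
        intro a
        by_cases ha : a = yi
        · simp only [hai, if_pos ha]
          have hprod : ∀ b : ∀ j : {j // j ≠ i}, C j → O,
              ∏ j, e j x ((Equiv.piSplitAt i (fun j => C j → O)).symm (a, b) j)
              = e i x a * ∏ j : {j // j ≠ i}, e j x (b j) := by
            intro b
            rw [Fintype.prod_eq_mul_prod_compl i]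
            congr 1
            · rw [hai]
            · rw [Finset.prod_subtype (p := fun j => j ≠ i) ({i}ᶜ : Finset (Fin m)) (fun j => by simp)
                (fun j => e j x ((Equiv.piSplitAt i (fun j => C j → O)).symm (a, b) j))]
              exact Fintype.prod_congr _ _ fun j => by rw [hbj a b j j.2]
          simp only [hprod, ← Finset.mul_sum]
          congr 1
          rw [← Fintype.prod_sum (fun (j : {j // j ≠ i}) (z : C j.1 → O) => e j x z)]
          simp only [hmarg, Finset.prod_const, Finset.card_univ]
          congr 1
          rw [Fintype.card_subtype_compl, Fintype.card_subtype_eq, Fintype.card_fin]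
        · simp [hai, ha]
      rw [Finset.sum_congr rfl fun a _ => this a]
      simp
    by_cases h : dm x = 0
    · have hzero : ∀ z : C i → O, e i x z = 0 := by
        intro z
        exact zsf_sum_eq_zero hzs Finset.univ (fun z => e i x z)
          (by rw [hmarg i x, h]) z (Finset.mem_univ z)
      simp [h, hzero]
    · simp only [if_neg h, ← Finset.mul_sum, hsub]
      rw [← mul_assoc, mul_comm ((dm x)⁻¹ ^ (m-1)) (e i x yi), mul_assoc,
        ← mul_pow, inv_mul_cancel₀ h, one_pow, mul_one]
end

section
/- Consider a subsystem qubit stabilizer code with virtual Pauli operators X'_1, Z'_1, …, X'_n, Z'_n satisfying the standard commutation relations, with check set C = {Z'_1, …, Z'_s, X'_{s+1}, Z'_{s+1}, …, X'_{s+g}, Z'_{s+g}} for some s, g ≥ 0 with s + g ≤ n. The compatibility graph of C (edge between two distinct operators iff they commute) has the Kirby--Love property if and only if g ≥ 2. -/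
/-- The compatibility graph on a family of operators: an edge between two distinct
vertices iff the labeling operators commute. -/
def compatGraph {V R : Type*} [Mul R] (op : V → R) : SimpleGraph V where
  Adj u v := u ≠ v ∧ op u * op v = op v * op u
  symm := ⟨fun _ _ h => ⟨h.1.symm, h.2.symm⟩⟩
  loopless := ⟨fun _ h => h.1 rfl⟩

/-- The check set `C = {Z'_1, …, Z'_s, X'_{s+1}, Z'_{s+1}, …, X'_{s+g}, Z'_{s+g}}` of a
subsystem qubit stabilizer code, as a family of operators indexed by
`Fin s ⊕ (Fin g × Bool)` (with `true` labelling the `X'` checks). -/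
def checkOp {R : Type*} (n s g : ℕ) (hsg : s + g ≤ n) (X' Z' : Fin n → R) :
    Fin s ⊕ (Fin g × Bool) → R
  | Sum.inl i => Z' ⟨i.1, by have h := i.2; omega⟩
  | Sum.inr (i, b) => (if b then X' else Z') ⟨s + i.1, by have h := i.2; omega⟩

/-!
A virtual Pauli fails to commute with another only if they are `X'_j` and `Z'_j` on the same
qubit, and these do anticommute since `2 ≠ 0` and both are involutions. So the non-edges of the
compatibility graph of `C` are exactly the gauge pairs `{X'_{s+i}, Z'_{s+i}}`. A Kirby--Love
configuration consists of two non-edges `{a, d}` and `{b, c}`, which are different because `a` is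
adjacent to `b` and `c`; hence it needs `g ≥ 2`, and any two gauge pairs provide one.
-/

theorem not_commute_of_anticommute {R : Type*} [Ring R] {x y : R} (h2 : (2 : R) ≠ 0)
    (hanti : x * y = -(y * x)) (hx : x * x = 1) (hy : y * y = 1) : ¬Commute x y := by
  intro hxy
  have htwo : 2 * (y * x) = 0 := by
    rw [two_mul, ← sub_neg_eq_add, ← hanti, hxy.eq, sub_self]
  have hinv : y * x * (x * y) = 1 := by
    rw [mul_assoc, ← mul_assoc x, hx, one_mul, hy]
  apply h2
  calc (2 : R) = 2 * (y * x * (x * y)) := by rw [hinv, mul_one]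
    _ = 2 * (y * x) * (x * y) := (mul_assoc _ _ _).symm
    _ = 0 := by rw [htwo, zero_mul]

theorem compatGraph_adj {V R : Type*} [Mul R] (op : V → R) {u v : V} :
    (compatGraph op).Adj u v ↔ u ≠ v ∧ Commute (op u) (op v) :=
  Iff.rfl

theorem not_hasKirbyLove_of_subsingleton_compl_edgeSet {V : Type*} {G : SimpleGraph V}
    (h : Gᶜ.edgeSet.Subsingleton) : ¬HasKirbyLove G := by
  rintro ⟨a, b, c, d, hab, hac, had, hbc, had', hbc'⟩
  have hpair : s(a, d) = s(b, c) :=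
    h ((SimpleGraph.mem_edgeSet _).2 ⟨had', had⟩) ((SimpleGraph.mem_edgeSet _).2 ⟨hbc', hbc⟩)
  rcases Sym2.eq_iff.1 hpair with ⟨rfl, -⟩ | ⟨rfl, -⟩
  · exact hab.ne rfl
  · exact hac.ne rfl

section Pauli

variable {R : Type*} [Ring R] {n : ℕ} (X' Z' : Fin n → R)

def pauli (σ : Fin n × Bool) : R := (if σ.2 then X' else Z') σ.1

variable {X' Z'}

theorem pauli_commute_of_fst_ne (hXX : ∀ j k, j ≠ k → X' j * X' k = X' k * X' j)
    (hZZ : ∀ j k, j ≠ k → Z' j * Z' k = Z' k * Z' j)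
    (hXZ : ∀ j k, j ≠ k → X' j * Z' k = Z' k * X' j)
    {σ τ : Fin n × Bool} (h : σ.1 ≠ τ.1) : Commute (pauli X' Z' σ) (pauli X' Z' τ) := by
  obtain ⟨j, _ | _⟩ := σ <;> obtain ⟨k, _ | _⟩ := τ
  · exact hZZ j k h
  · exact (hXZ k j h.symm).symm
  · exact hXZ j k h
  · exact hXX j k h

theorem fst_eq_and_snd_ne_of_not_commute_pauli
    (hXX : ∀ j k, j ≠ k → X' j * X' k = X' k * X' j)
    (hZZ : ∀ j k, j ≠ k → Z' j * Z' k = Z' k * Z' j)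
    (hXZ : ∀ j k, j ≠ k → X' j * Z' k = Z' k * X' j)
    {σ τ : Fin n × Bool} (h : ¬Commute (pauli X' Z' σ) (pauli X' Z' τ)) :
    σ.1 = τ.1 ∧ σ.2 ≠ τ.2 := by
  by_cases hfst : σ.1 = τ.1
  · refine ⟨hfst, fun hsnd => h ?_⟩
    rw [Prod.ext hfst hsnd]
  · exact absurd (pauli_commute_of_fst_ne hXX hZZ hXZ hfst) h

end Pauli

section CheckSet

variable {n s g : ℕ} (hsg : s + g ≤ n)

def checkSite : Fin s ⊕ (Fin g × Bool) → Fin n × Bool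
  | Sum.inl i => (⟨i.1, by omega⟩, false)
  | Sum.inr (i, b) => (⟨s + i.1, by omega⟩, b)

theorem checkOp_eq_pauli {R : Type*} (X' Z' : Fin n → R) :
    checkOp n s g hsg X' Z' = pauli X' Z' ∘ checkSite hsg := by
  funext u
  rcases u with i | ⟨i, b⟩ <;> rfl

theorem exists_gauge_pair_of_checkSite {u v : Fin s ⊕ (Fin g × Bool)}
    (hfst : (checkSite hsg u).1 = (checkSite hsg v).1)
    (hsnd : (checkSite hsg u).2 ≠ (checkSite hsg v).2) :
    ∃ i, s(u, v) = s(Sum.inr (i, true), Sum.inr (i, false)) := by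
  rcases u with i | ⟨i, b⟩ <;> rcases v with j | ⟨j, c⟩ <;>
    simp only [checkSite, Fin.mk.injEq, ne_eq] at hfst hsnd
  · exact (hsnd trivial).elim
  · omega
  · omega
  · obtain rfl : i = j := Fin.ext (by omega)
    refine ⟨i, ?_⟩
    cases b <;> cases c <;> simp_all [Sym2.eq_swap]

theorem compl_compatGraph_checkOp_edgeSet {R : Type*} [Ring R] {X' Z' : Fin n → R}
    (hXX : ∀ j k, j ≠ k → X' j * X' k = X' k * X' j)
    (hZZ : ∀ j k, j ≠ k → Z' j * Z' k = Z' k * Z' j)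
    (hXZ : ∀ j k, j ≠ k → X' j * Z' k = Z' k * X' j) :
    ∀ e ∈ (compatGraph (checkOp n s g hsg X' Z'))ᶜ.edgeSet,
      ∃ i, e = s(Sum.inr (i, true), Sum.inr (i, false)) := by
  rintro ⟨u, v⟩ huv
  rw [SimpleGraph.mem_edgeSet, SimpleGraph.compl_adj, compatGraph_adj, checkOp_eq_pauli] at huv
  obtain ⟨hfst, hsnd⟩ :=
    fst_eq_and_snd_ne_of_not_commute_pauli hXX hZZ hXZ fun h => huv.2 ⟨huv.1, h⟩
  exact exists_gauge_pair_of_checkSite hsg hfst hsnd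

end CheckSet

/-- For a subsystem qubit stabilizer code with virtual Pauli operators `X'_j, Z'_j`
satisfying the standard (anti)commutation relations, the compatibility graph of the
check set `C = {Z'_1, …, Z'_s, X'_{s+1}, Z'_{s+1}, …, X'_{s+g}, Z'_{s+g}}` has the
Kirby--Love property if and only if `g ≥ 2`. -/
theorem checkSet_hasKirbyLove_iff_two_gauge_qubits {R : Type*} [Ring R]
    (n s g : ℕ) (hsg : s + g ≤ n) (X' Z' : Fin n → R)
    (h2 : (2 : R) ≠ 0)
    (hXX : ∀ j k, j ≠ k → X' j * X' k = X' k * X' j)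
    (hZZ : ∀ j k, j ≠ k → Z' j * Z' k = Z' k * Z' j)
    (hXZ : ∀ j k, j ≠ k → X' j * Z' k = Z' k * X' j)
    (hanti : ∀ j, X' j * Z' j = -(Z' j * X' j))
    (hXsq : ∀ j, X' j * X' j = 1)
    (hZsq : ∀ j, Z' j * Z' j = 1) :
    HasKirbyLove (compatGraph (checkOp n s g hsg X' Z')) ↔ 2 ≤ g := by
  have hnc : ∀ j, ¬Commute (pauli X' Z' (j, true)) (pauli X' Z' (j, false)) := fun j =>
    not_commute_of_anticommute h2 (hanti j) (hXsq j) (hZsq j)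
  constructor
  · intro hKL
    by_contra! hg
    have : Subsingleton (Fin g) := Fin.subsingleton_iff_le_one.2 (by omega)
    refine not_hasKirbyLove_of_subsingleton_compl_edgeSet (fun e he e' he' => ?_) hKL
    have hpair := compl_compatGraph_checkOp_edgeSet hsg hXX hZZ hXZ
    obtain ⟨i, rfl⟩ := hpair e he
    obtain ⟨i', rfl⟩ := hpair e' he'
    rw [Subsingleton.elim i i']
  · intro hg
    let i₀ : Fin g := ⟨0, by omega⟩
    let i₁ : Fin g := ⟨1, by omega⟩
    -- `a = X'_{s+1}`, `b = X'_{s+2}`, `c = Z'_{s+2}`, `d = Z'_{s+1}`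
    refine ⟨.inr (i₀, true), .inr (i₁, true), .inr (i₁, false), .inr (i₀, false),
      ?_, ?_, ?_, ?_, by simp, by simp⟩
    all_goals simp only [compatGraph_adj, checkOp_eq_pauli, Function.comp_apply]
    iterate 2
      exact ⟨by simp [i₀, i₁], pauli_commute_of_fst_ne hXX hZZ hXZ (by simp [checkSite, i₀, i₁])⟩
    iterate 2 exact fun h => hnc _ h.2
end
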